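/- arXiv:2105.02812 — 7 statements merged into one kernel-verified Lean document; each statement's English description precedes it below -/
import Mathlib

section
/- Let p be an odd prime and let F be a finite field of characteristic p whose degree [F:F_p] over the prime field is divisible by 4. Let η be the quadratic character of F (the unique multiplicative character of F of order 2), let ψ_p be a nontrivial additive character of F_p, and set ψ(x) = ψ_p(Tr_{F/F_p}(x)). Then Σ_{t∈F^×} η(t)ψ(t) = −p^{[F:F_p]/2}; equivalently, the Gauss sum g(η,ψ) := −Σ_{t∈F^×} η(t)ψ(t) equals |F|^{1/2}. -/
/-!
Let `E ⊆ F` be the subfield with `[F : E] = 2`, pick a nonsquare `d ∈ E` and a square root `r`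
of `d` in `F`, so that `F = E ⊕ E r`. Writing `ψ_E = ψ_p ∘ Tr_{E/F_p}`, the Gauss sum of `F` is
`∑ₓ ψ_E(Tr_{F/E}(x²))`, and `Tr_{F/E}((a + b r)²) = 2a² + 2d b²`, so it factors as
`(∑ₐ ψ_E(2a²)) (∑_b ψ_E(2d b²)) = η_E(2) η_E(2d) g_E² = -η_E(-1) |E|`.
Finally `η_E(-1) = χ₄(|E|) = χ₄(p) ^ ([F : F_p] / 2)`, which is `1` as `[F : F_p] / 2` is even.
-/

attribute [local instance] ZMod.algebra

open Polynomial Finset Module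

noncomputable def quadraticCharCast (F R : Type*) [Field F] [Fintype F] [DecidableEq F]
    [CommRing R] : MulChar F R :=
  (quadraticChar F).ringHomComp (Int.castRingHom R)

section QuadraticCharCast

variable {F R : Type*} [Field F] [Fintype F] [DecidableEq F] [CommRing R]

lemma quadraticCharCast_apply (x : F) : quadraticCharCast F R x = (quadraticChar F x : R) := rfl

lemma quadraticCharCast_isQuadratic : (quadraticCharCast F R).IsQuadratic :=
  (quadraticChar_isQuadratic F).comp _

lemma quadraticCharCast_ne_one [CharZero R] (hF : ringChar F ≠ 2) : quadraticCharCast F R ≠ 1 :=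
  (MulChar.ringHomComp_ne_one_iff (RingHom.injective_int _)).mpr (quadraticChar_ne_one hF)

lemma sum_comp_sq_eq_sum_quadraticCharCast_add_one_mul (hF : ringChar F ≠ 2) (f : F → R) :
    ∑ x : F, f (x ^ 2) = ∑ y : F, (quadraticCharCast F R y + 1) * f y := by
  rw [← Finset.sum_fiberwise univ (· ^ 2)]
  refine Finset.sum_congr rfl fun y _ => ?_
  rw [Finset.sum_congr rfl fun x hx => by rw [(mem_filter.mp hx).2], sum_const, nsmul_eq_mul,
    quadraticCharCast_apply]
  have hcard := quadraticChar_card_sqrts hF y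
  rw [Set.toFinset_ofPred] at hcard
  congr 1
  exact_mod_cast congrArg (Int.cast : ℤ → R) hcard

lemma sum_addChar_mul_sq [IsDomain R] (hF : ringChar F ≠ 2) {ψ : AddChar F R} (hψ : ψ ≠ 1)
    {c : F} (hc : c ≠ 0) :
    ∑ x : F, ψ (c * x ^ 2) = quadraticCharCast F R c * gaussSum (quadraticCharCast F R) ψ := by
  have hsum : ∑ y : F, ψ (c * y) = 0 :=
    AddChar.sum_eq_zero_of_ne_one (AddChar.IsPrimitive.of_ne_one hψ hc)
  have hshift := gaussSum_mulShift_eq (quadraticCharCast F R) ψ (Units.mk0 c hc)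
  rw [quadraticCharCast_isQuadratic.inv, Units.val_mk0] at hshift
  rw [sum_comp_sq_eq_sum_quadraticCharCast_add_one_mul hF (fun y => ψ (c * y)), ← hshift, gaussSum]
  simp only [add_mul, one_mul, sum_add_distrib, hsum, add_zero, AddChar.mulShift_apply]

end QuadraticCharCast

/-- Both characters are `1` on the squares, and a character of order `2` is `-1` on some
nonsquare `v`; every nonsquare is `v` times a square. -/
lemma MulChar.eq_quadraticCharCast_of_orderOf_eq_two {F R : Type*} [Field F] [Fintype F]
    [DecidableEq F] [CommRing R] [IsDomain R] {η : MulChar F R} (hη : orderOf η = 2) :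
    η = quadraticCharCast F R := by
  have hsq : ∀ {x : F}, x ≠ 0 → η x * η x = 1 := fun hx => by
    rw [← MulChar.mul_apply, ← sq, ← hη, pow_orderOf_eq_one, MulChar.one_apply (Ne.isUnit hx)]
  have hsquare : ∀ {x : F}, x ≠ 0 → IsSquare x → η x = 1 := by
    rintro x hx ⟨w, rfl⟩
    rw [map_mul, hsq (left_ne_zero_of_mul hx)]
  have hne : η ≠ 1 := by rintro rfl; simp at hη
  obtain ⟨v, hv⟩ := MulChar.ne_one_iff.mp hne
  have hv' : η v = -1 := (mul_self_eq_one_iff.mp (hsq v.ne_zero)).resolve_left hv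
  refine MulChar.ext fun u => ?_
  rw [quadraticCharCast_apply]
  by_cases hu : IsSquare (u : F)
  · rw [hsquare u.ne_zero hu, (quadraticChar_one_iff_isSquare u.ne_zero).mpr hu, Int.cast_one]
  have hvsq : ¬ IsSquare (v : F) := fun h => hv (hsquare v.ne_zero h)
  have huv : IsSquare ((u : F) * v) := by
    rw [← quadraticChar_one_iff_isSquare (mul_ne_zero u.ne_zero v.ne_zero), map_mul,
      quadraticChar_neg_one_iff_not_isSquare.mpr hu,
      quadraticChar_neg_one_iff_not_isSquare.mpr hvsq]
    norm_num
  have huv' := hsquare (mul_ne_zero u.ne_zero v.ne_zero) huv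
  rw [map_mul, hv'] at huv'
  rw [quadraticChar_neg_one_iff_not_isSquare.mpr hu, Int.cast_neg, Int.cast_one]
  linear_combination -huv'

lemma gaussSum_eq_sum_units {R R' : Type*} [CommRing R] [Fintype R] [DecidableEq R] [CommRing R']
    (χ : MulChar R R') (ψ : AddChar R R') : gaussSum χ ψ = ∑ u : Rˣ, χ u * ψ u := by
  classical
  rw [gaussSum, ← Finset.sum_filter_of_ne (p := IsUnit) fun a _ h => by
    by_contra ha; rw [χ.map_nonunit ha, zero_mul] at h; exact h rfl]
  symm
  exact Finset.sum_bij (fun u _ => (u : R)) (fun u _ => mem_filter.mpr ⟨mem_univ _, u.isUnit⟩)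
    (fun _ _ _ _ h => Units.ext h) (fun a ha => ⟨(mem_filter.mp ha).2.unit, mem_univ _, rfl⟩)
    (fun _ _ => rfl)

lemma AddChar.compAddMonoidHom_ne_one {A B M : Type*} [AddMonoid A] [AddMonoid B] [Monoid M]
    {f : A →+ B} (hf : Function.Surjective f) {ψ : AddChar B M} (hψ : ψ ≠ 1) :
    ψ.compAddMonoidHom f ≠ 1 := by
  obtain ⟨b, hb⟩ := AddChar.ne_one_iff.mp hψ
  obtain ⟨a, rfl⟩ := hf b
  exact AddChar.ne_one_iff.mpr ⟨a, hb⟩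

section QuadraticExtension

variable {E K : Type*} [Field E] [Field K] [Algebra E K] {d : E} {r : K}

lemma minpoly_eq_X_sq_sub_C (hd : ¬ IsSquare d) (hr : r ^ 2 = algebraMap E K d) :
    minpoly E r = X ^ 2 - C d := by
  refine (minpoly.eq_of_irreducible_of_monic ?_ ?_ (monic_X_pow_sub_C d two_ne_zero)).symm
  · exact X_pow_sub_C_irreducible_of_prime Nat.prime_two fun b hb => hd ⟨b, by rw [← hb]; ring⟩
  · simp [hr]

lemma trace_eq_zero_of_sq_eq_algebraMap [FiniteDimensional E K] (hd : ¬ IsSquare d)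
    (hr : r ^ 2 = algebraMap E K d) : Algebra.trace E K r = 0 := by
  have hnext : (X ^ 2 - C d).nextCoeff = 0 := by
    rw [nextCoeff_of_natDegree_pos (by rw [natDegree_X_pow_sub_C]; norm_num),
      natDegree_X_pow_sub_C]
    simp
  rw [trace_eq_finrank_mul_minpoly_nextCoeff, minpoly_eq_X_sq_sub_C hd hr, hnext, neg_zero,
    mul_zero]

lemma trace_sq_algebraMap_add_smul [FiniteDimensional E K] (hK : finrank E K = 2)
    (hd : ¬ IsSquare d) (hr : r ^ 2 = algebraMap E K d) (a b : E) :
    Algebra.trace E K ((algebraMap E K a + b • r) ^ 2) = 2 * a ^ 2 + 2 * d * b ^ 2 := by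
  have hexp : (algebraMap E K a + b • r) ^ 2
      = algebraMap E K (a ^ 2 + d * b ^ 2) + (2 * a * b) • r := by
    simp only [Algebra.smul_def, map_add, map_mul, map_pow, map_ofNat]
    linear_combination (algebraMap E K b) ^ 2 * hr
  rw [hexp, map_add, Algebra.trace_algebraMap, hK, map_smul,
    trace_eq_zero_of_sq_eq_algebraMap hd hr]
  simp only [smul_zero, add_zero, nsmul_eq_mul]
  push_cast
  ring

lemma bijective_algebraMap_add_smul [Fintype E] [Fintype K] (hK : finrank E K = 2)
    (hd : ¬ IsSquare d) (hr : r ^ 2 = algebraMap E K d) :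
    Function.Bijective (fun v : E × E => algebraMap E K v.1 + v.2 • r) := by
  rw [Fintype.bijective_iff_injective_and_card, Fintype.card_prod,
    card_eq_pow_finrank (K := E) (V := K), hK]
  refine ⟨fun v w hvw => ?_, by ring⟩
  have hb : v.2 = w.2 := by
    by_contra hne
    have hr' : r = algebraMap E K ((w.1 - v.1) / (v.2 - w.2)) := by
      rw [map_div₀, eq_div_iff ((_root_.map_ne_zero _).mpr (sub_ne_zero.mpr hne))]
      simp only [Algebra.smul_def, map_sub] at hvw ⊢
      linear_combination hvw
    exact hd ⟨_, (algebraMap E K).injective (by rw [map_mul, ← hr', ← sq, hr])⟩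
  have ha : v.1 = w.1 := by simpa [hb] using hvw
  exact Prod.ext ha hb

lemma sum_addChar_trace_sq [Fintype E] [Fintype K] {R : Type*} [CommSemiring R]
    (hK : finrank E K = 2) (hd : ¬ IsSquare d) (hr : r ^ 2 = algebraMap E K d)
    (ψ : AddChar E R) :
    ∑ x : K, ψ (Algebra.trace E K (x ^ 2))
      = (∑ a : E, ψ (2 * a ^ 2)) * ∑ b : E, ψ (2 * d * b ^ 2) := by
  rw [← Fintype.sum_bijective _ (bijective_algebraMap_add_smul hK hd hr)
    (fun v => ψ (Algebra.trace E K ((algebraMap E K v.1 + v.2 • r) ^ 2))) _ (fun _ => rfl),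
    Fintype.sum_prod_type, Finset.sum_mul_sum]
  simp only [trace_sq_algebraMap_add_smul hK hd hr, AddChar.map_add_eq_mul]

end QuadraticExtension

section FiniteQuadraticExtension

variable {E K : Type*} [Field E] [Fintype E] [Field K] [Fintype K] [Algebra E K]

/-- `E^×` has order `q - 1`, which divides `(q ^ 2 - 1) / 2`, the index of the squares in `K^×`. -/
lemma isSquare_algebraMap_of_finrank_eq_two (hE : ringChar E ≠ 2) (hK : finrank E K = 2)
    (x : E) : IsSquare (algebraMap E K x) := by
  rcases eq_or_ne x 0 with rfl | hx
  · exact ⟨0, by simp⟩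
  have hK2 : ringChar K ≠ 2 := by rwa [← Algebra.ringChar_eq E K]
  obtain ⟨m, hm⟩ : Odd (Fintype.card E) := Nat.odd_iff.mpr (FiniteField.odd_card_of_char_ne_two hE)
  have hexp : Fintype.card K / 2 = (Fintype.card E - 1) * (m + 1) := by
    rw [card_eq_pow_finrank (K := E) (V := K), hK, hm]
    have : (2 * m + 1) ^ 2 = 2 * ((2 * m + 1 - 1) * (m + 1)) + 1 := by
      rw [Nat.add_sub_cancel]; ring
    omega
  rw [FiniteField.isSquare_iff hK2 ((_root_.map_ne_zero _).mpr hx), hexp, pow_mul, ← map_pow,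
    FiniteField.pow_card_sub_one_eq_one x hx, map_one, one_pow]

variable [DecidableEq E] [DecidableEq K]

theorem gaussSum_quadraticCharCast_trace_of_finrank_eq_two {R : Type*} [CommRing R] [IsDomain R]
    [CharZero R] (hE : ringChar E ≠ 2) (hK : finrank E K = 2) {ψ : AddChar E R} (hψ : ψ ≠ 1) :
    gaussSum (quadraticCharCast K R) (ψ.compAddMonoidHom (Algebra.trace E K).toAddMonoidHom)
      = -(quadraticCharCast E R (-1) * Fintype.card E) := by
  set χ := quadraticCharCast E R
  have hK2 : ringChar K ≠ 2 := by rwa [← Algebra.ringChar_eq E K]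
  obtain ⟨d, hd⟩ := FiniteField.exists_nonsquare hE
  obtain ⟨r, hr⟩ := isSquare_algebraMap_of_finrank_eq_two hE hK d
  have h2 : (2 : E) ≠ 0 := Ring.two_ne_zero hE
  have hd0 : d ≠ 0 := by rintro rfl; exact hd ⟨0, by simp⟩
  have hχ : χ 2 * χ (2 * d) = -1 := by
    rw [← map_mul, show (2 : E) * (2 * d) = 2 ^ 2 * d by ring, map_mul, quadraticCharCast_apply,
      quadraticCharCast_apply, quadraticChar_sq_one' h2,
      quadraticChar_neg_one_iff_not_isSquare.mpr hd]
    norm_num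
  have hψK := AddChar.compAddMonoidHom_ne_one (f := (Algebra.trace E K).toAddMonoidHom)
    (Algebra.trace_surjective E K) hψ
  calc gaussSum (quadraticCharCast K R) (ψ.compAddMonoidHom (Algebra.trace E K).toAddMonoidHom)
      = ∑ x : K, ψ (Algebra.trace E K (x ^ 2)) := by
        simpa using (sum_addChar_mul_sq hK2 hψK one_ne_zero).symm
    _ = χ 2 * χ (2 * d) * gaussSum χ ψ ^ 2 := by
        rw [sum_addChar_trace_sq hK hd ((sq r).trans hr.symm) ψ, sum_addChar_mul_sq hE hψ h2,
          sum_addChar_mul_sq hE hψ (mul_ne_zero h2 hd0)]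
        ring
    _ = -(χ (-1) * Fintype.card E) := by
        rw [hχ, gaussSum_sq (quadraticCharCast_ne_one hE) quadraticCharCast_isQuadratic
          (AddChar.IsPrimitive.of_ne_one hψ)]
        ring

end FiniteQuadraticExtension

lemma Module.finrank_eq_of_card_eq_pow {E K : Type*} [Field E] [Fintype E] [AddCommGroup K]
    [Module E K] [Fintype K] {n : ℕ} (h : Fintype.card K = Fintype.card E ^ n) :
    finrank E K = n :=
  Nat.pow_right_injective (Fintype.one_lt_card (α := E)) (by simp only [← card_eq_pow_finrank, h])

theorem gaussSum_quadraticCharCast_trace_zmod {p : ℕ} [Fact p.Prime] (hp : p ≠ 2) {F : Type*}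
    [Field F] [Fintype F] [DecidableEq F] [CharP F p] {m : ℕ}
    (hm : finrank (ZMod p) F = 2 * m) {R : Type*} [CommRing R] [IsDomain R] [CharZero R]
    {ψ : AddChar (ZMod p) R} (hψ : ψ ≠ 1) :
    gaussSum (quadraticCharCast F R) (ψ.compAddMonoidHom (Algebra.trace (ZMod p) F).toAddMonoidHom)
      = -((ZMod.χ₄ p : R) * p) ^ m := by
  classical
  have hm0 : m ≠ 0 := by rintro rfl; exact Module.finrank_pos.ne' hm
  let E := GaloisField p m
  have : Fintype E := Fintype.ofFinite E
  obtain ⟨φ⟩ := FiniteField.nonempty_algHom_of_finrank_dvd (K := E) (L := F) (F := ZMod p)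
    (by rw [GaloisField.finrank p hm0, hm]; exact dvd_mul_left m 2)
  let _ : Algebra E F := φ.toAlgebra
  have : IsScalarTower (ZMod p) E F := IsScalarTower.of_algebraMap_eq' (RingHom.ext_zmod _ _)
  have hcardE : Fintype.card E = p ^ m := by
    rw [← Nat.card_eq_fintype_card, GaloisField.card p m hm0]
  have hEF : finrank E F = 2 := Module.finrank_eq_of_card_eq_pow <| by
    rw [card_eq_pow_finrank (K := ZMod p), ZMod.card, hm, hcardE, pow_mul']
  have hE2 : ringChar E ≠ 2 := by rwa [Algebra.ringChar_eq E F, ringChar.eq F p]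
  have htrace : ψ.compAddMonoidHom (Algebra.trace (ZMod p) F).toAddMonoidHom
      = (ψ.compAddMonoidHom (Algebra.trace (ZMod p) E).toAddMonoidHom).compAddMonoidHom
        (Algebra.trace E F).toAddMonoidHom := by
    ext x; simp [Algebra.trace_trace]
  rw [htrace, gaussSum_quadraticCharCast_trace_of_finrank_eq_two hE2 hEF
    (AddChar.compAddMonoidHom_ne_one (Algebra.trace_surjective _ _) hψ), quadraticCharCast_apply,
    quadraticChar_neg_one hE2, hcardE, Nat.cast_pow, map_pow]
  push_cast
  ring

/-- If `p` is an odd prime, `F` is a finite field of characteristic `p` with `4 ∣ [F : F_p]`,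
`η` is the quadratic character of `F` and `ψ(x) = ψ_p(Tr_{F/F_p}(x))` for a nontrivial additive
character `ψ_p` of `F_p`, then `∑_{t ∈ F^×} η(t)ψ(t) = −p^{[F:F_p]/2}`. -/
theorem stmt6 (p : ℕ) [Fact p.Prime] (hp : p ≠ 2)
    (F : Type*) [Field F] [Fintype F] [DecidableEq F] [CharP F p]
    (h4 : 4 ∣ Module.finrank (ZMod p) F)
    (η : MulChar F ℂ) (hη : orderOf η = 2)
    (ψp : AddChar (ZMod p) ℂ) (hψ : ψp ≠ 1) :
    ∑ t : Fˣ, η t * ψp (Algebra.trace (ZMod p) F t) =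
      -(p : ℂ) ^ (Module.finrank (ZMod p) F / 2) := by
  obtain ⟨k, hk⟩ := h4
  have hχ₄ : (ZMod.χ₄ p : ℂ) ^ 2 = 1 := by
    have hodd : p % 2 = 1 := Nat.odd_iff.mp ((Fact.out : p.Prime).odd_of_ne_two hp)
    rw [ZMod.χ₄_nat_eq_if_mod_four, if_neg (by omega)]
    split_ifs <;> norm_num
  rw [MulChar.eq_quadraticCharCast_of_orderOf_eq_two hη]
  calc ∑ t : Fˣ, quadraticCharCast F ℂ t * ψp (Algebra.trace (ZMod p) F t)
      = gaussSum (quadraticCharCast F ℂ)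
          (ψp.compAddMonoidHom (Algebra.trace (ZMod p) F).toAddMonoidHom) := by
        rw [gaussSum_eq_sum_units]
        rfl
    _ = -((ZMod.χ₄ p : ℂ) * p) ^ (2 * k) := gaussSum_quadraticCharCast_trace_zmod hp (by omega) hψ
    _ = -(p : ℂ) ^ (finrank (ZMod p) F / 2) := by
        rw [hk, show 4 * k / 2 = 2 * k by omega, pow_mul, pow_mul, mul_pow, hχ₄, one_mul]
end

section
/- Let p be an odd prime, let ν ≥ 1, let F be the finite field with p^{2ν} elements, and let F₀ ⊂ F be its subfield with p^ν elements. Let ψ_p be a nontrivial additive character of F_p and set ψ(x) = ψ_p(Tr_{F/F_p}(x)). Let χ be a nontrivial multiplicative character of F whose order divides p^ν + 1. Then for every x ∈ F^× with Tr_{F/F₀}(x) = 0, one has χ(x) ∈ {1, −1} and Σ_{t∈F^×} χ(t)ψ(t) = χ(x)·p^ν; in particular this Gauss sum equals p^ν or −p^ν. -/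
/-!
Write `q = |F₀|`. As `F/F₀` is quadratic, the norm is `y ↦ y ^ (q + 1)` and a trace-zero `x`
satisfies `x ^ q = -x`, so `x² = -N(x) ∈ F₀ˣ`. The norm is surjective onto `F₀`, hence
`χ ^ (q + 1) = 1` makes `χ` trivial on `F₀ˣ`, and in particular `χ(x)² = 1`.

For the Gauss sum write `ψ = ψ₀ ∘ Tr_{F/F₀}`. The substitutions `t ↦ c t`, `c ∈ F₀ˣ`, leave it
unchanged, so averaging over them and using orthogonality of `ψ₀` gives
`(q - 1) G = q ∑_{Tr t = 0} χ(t)`. The trace-zero elements form the line `F₀ x`, on which `χ`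
takes the value `χ(x)` except at `0`, so the right side is `q (q - 1) χ(x)`.
-/

attribute [local instance] ZMod.algebra

open Finset Module

lemma sum_units_eq_sum_of_map_zero {G₀ M : Type*} [GroupWithZero G₀] [Fintype G₀]
    [DecidableEq G₀] [AddCommMonoid M] {f : G₀ → M} (hf : f 0 = 0) :
    ∑ u : G₀ˣ, f u = ∑ a, f a :=
  calc ∑ u : G₀ˣ, f u = ∑ a : {a : G₀ // a ≠ 0}, f a :=
        Fintype.sum_equiv unitsEquivNeZero _ _ fun _ => rfl
    _ = ∑ a with a ≠ 0, f a := (sum_subtype _ (by simp) _).symm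
    _ = ∑ a, f a := sum_filter_of_ne fun a _ hfa ha => hfa (ha ▸ hf)

lemma Module.finrank_eq_two_of_card_eq_sq {K L : Type*} [Field K] [Fintype K] [AddCommGroup L]
    [Fintype L] [Module K L] (h : Fintype.card L = Fintype.card K ^ 2) : finrank K L = 2 :=
  Nat.pow_right_injective Fintype.one_lt_card
    (show Fintype.card K ^ finrank K L = Fintype.card K ^ 2 by rw [← card_eq_pow_finrank, h])

lemma Algebra.ker_trace_eq_span_singleton {K L : Type*} [Field K] [Field L] [Algebra K L]
    [FiniteDimensional K L] [Algebra.IsSeparable K L] (hrank : finrank K L = 2) {x : L}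
    (hx0 : x ≠ 0) (hx : Algebra.trace K L x = 0) :
    LinearMap.ker (Algebra.trace K L) = K ∙ x := by
  have hker : finrank K (LinearMap.ker (Algebra.trace K L)) = 1 := by
    have := LinearMap.finrank_range_add_finrank_ker (Algebra.trace K L)
    rw [LinearMap.range_eq_top.mpr (Algebra.trace_surjective K L), finrank_top,
      finrank_self, hrank] at this
    omega
  refine (Submodule.eq_of_le_of_finrank_le ?_ ?_).symm
  · rwa [Submodule.span_singleton_le_iff_mem]
  · rw [hker, finrank_span_singleton hx0]

namespace FiniteField

variable {K L : Type*} [Field K] [Fintype K] [Field L] [Fintype L] [Algebra K L]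

lemma pow_card_eq_neg_of_trace_eq_zero (hrank : finrank K L = 2) {x : L}
    (hx : Algebra.trace K L x = 0) : x ^ Fintype.card K = -x := by
  have := algebraMap_trace_eq_sum_pow K L x
  rw [hx, map_zero, hrank, sum_range_succ, sum_range_one, pow_zero, pow_one, pow_one,
    Nat.card_eq_fintype_card] at this
  exact (neg_eq_of_add_eq_zero_right this.symm).symm

lemma algebraMap_norm_eq_pow_card_add_one (hrank : finrank K L = 2) (x : L) :
    algebraMap K L (Algebra.norm K x) = x ^ (Fintype.card K + 1) := by
  rw [algebraMap_norm_eq_pow_sum, hrank, Nat.card_eq_fintype_card]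
  simp [sum_range_succ, add_comm]

lemma algebraMap_norm_eq_neg_sq_of_trace_eq_zero (hrank : finrank K L = 2) {x : L}
    (hx : Algebra.trace K L x = 0) : algebraMap K L (Algebra.norm K x) = -x ^ 2 := by
  rw [algebraMap_norm_eq_pow_card_add_one hrank, pow_succ,
    pow_card_eq_neg_of_trace_eq_zero hrank hx]
  ring

end FiniteField

namespace MulChar

open FiniteField

variable {K L R : Type*} [Field K] [Field L] [Fintype L] [Algebra K L]

lemma sum_mul_addChar_const_mul_trace [CommRing R] {χ : MulChar L R} (ψ : AddChar K R)
    (hχK : ∀ c : K, c ≠ 0 → χ (algebraMap K L c) = 1) {c : K} (hc : c ≠ 0) :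
    ∑ t, χ t * ψ (c * Algebra.trace K L t) = ∑ t, χ t * ψ (Algebra.trace K L t) := by
  refine Fintype.sum_bijective _ (mulLeft_bijective₀ (algebraMap K L c) (by simpa using hc))
    _ _ fun t => ?_
  rw [map_mul χ, hχK c hc, one_mul, ← Algebra.smul_def, map_smul, smul_eq_mul]

variable [Fintype K]

lemma apply_algebraMap_eq_one_of_pow_card_add_one_eq_one [CommMonoidWithZero R]
    (hrank : finrank K L = 2) {χ : MulChar L R} (hχ : χ ^ (Fintype.card K + 1) = 1) {c : K}
    (hc : c ≠ 0) : χ (algebraMap K L c) = 1 := by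
  obtain ⟨y, rfl⟩ := norm_surjective K L c
  have hy : y ≠ 0 := by rintro rfl; simp at hc
  rw [algebraMap_norm_eq_pow_card_add_one hrank, map_pow, ← pow_apply' χ (by omega), hχ,
    one_apply (Ne.isUnit hy)]

lemma sq_apply_eq_one_of_trace_eq_zero [CommMonoidWithZero R] (hrank : finrank K L = 2)
    {χ : MulChar L R} (hχK : ∀ c : K, c ≠ 0 → χ (algebraMap K L c) = 1) {x : L} (hx0 : x ≠ 0)
    (hx : Algebra.trace K L x = 0) : χ x ^ 2 = 1 := by
  rw [← map_pow, ← neg_neg (x ^ 2), ← algebraMap_norm_eq_neg_sq_of_trace_eq_zero hrank hx,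
    ← map_neg]
  exact hχK _ (neg_ne_zero.mpr (Algebra.norm_ne_zero_iff.mpr hx0))

variable [CommRing R] {χ : MulChar L R}

lemma sum_filter_trace_eq_zero [DecidableEq K] (hrank : finrank K L = 2)
    (hχK : ∀ c : K, c ≠ 0 → χ (algebraMap K L c) = 1) {x : L} (hx0 : x ≠ 0)
    (hx : Algebra.trace K L x = 0) :
    ∑ t with Algebra.trace K L t = 0, χ t = (Fintype.card K - 1) * χ x := by
  have hline : univ.filter (fun t => Algebra.trace K L t = 0) =
      univ.map ⟨(· • x), smul_left_injective K hx0⟩ := by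
    ext t
    simp [← LinearMap.mem_ker, Algebra.ker_trace_eq_span_singleton hrank hx0 hx,
      Submodule.mem_span_singleton]
  have hmul : ∀ c ∈ (univ : Finset K).erase 0, χ (c • x) = χ x := fun c hc => by
    rw [Algebra.smul_def, map_mul, hχK c (ne_of_mem_erase hc), one_mul]
  rw [hline, sum_map, ← add_sum_erase _ _ (mem_univ 0), Function.Embedding.coeFn_mk, zero_smul,
    χ.map_zero, zero_add, sum_congr rfl hmul, sum_const, card_erase_of_mem (mem_univ 0),
    card_univ, nsmul_eq_mul, Nat.cast_sub Fintype.card_pos, Nat.cast_one]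

variable [IsDomain R] {ψ : AddChar K R}

lemma card_sub_one_mul_sum_mul_addChar_trace [DecidableEq K] (hχ : χ ≠ 1)
    (hχK : ∀ c : K, c ≠ 0 → χ (algebraMap K L c) = 1) (hψ : ψ ≠ 1) :
    (Fintype.card K - 1 : R) * ∑ t, χ t * ψ (Algebra.trace K L t) =
      Fintype.card K * ∑ t with Algebra.trace K L t = 0, χ t := by
  calc (Fintype.card K - 1 : R) * ∑ t, χ t * ψ (Algebra.trace K L t)
      = ∑ c : K, ∑ t, χ t * ψ (c * Algebra.trace K L t) := by
        rw [← add_sum_erase (univ : Finset K) _ (mem_univ 0),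
          sum_congr rfl fun c hc => sum_mul_addChar_const_mul_trace ψ hχK (ne_of_mem_erase hc),
          sum_const, card_erase_of_mem (mem_univ 0), card_univ, nsmul_eq_mul,
          Nat.cast_sub Fintype.card_pos, Nat.cast_one]
        simp only [zero_mul, AddChar.map_zero_eq_one, mul_one, sum_eq_zero_of_ne_one hχ,
          zero_add]
    _ = ∑ t, χ t * ∑ c : K, ψ (c * Algebra.trace K L t) := by
        rw [sum_comm]
        simp only [mul_sum]
    _ = ∑ t, χ t * if Algebra.trace K L t = 0 then (Fintype.card K : R) else 0 := by
        simp only [AddChar.sum_mulShift _ (AddChar.IsPrimitive.of_ne_one hψ), Nat.cast_ite,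
          Nat.cast_zero]
    _ = Fintype.card K * ∑ t with Algebra.trace K L t = 0, χ t := by
        rw [sum_filter, mul_sum]
        exact sum_congr rfl fun t _ => by split_ifs <;> ring

lemma sum_mul_addChar_trace_eq_card_mul [CharZero R] (hrank : finrank K L = 2) (hχ : χ ≠ 1)
    (hχK : ∀ c : K, c ≠ 0 → χ (algebraMap K L c) = 1) (hψ : ψ ≠ 1) {x : L} (hx0 : x ≠ 0)
    (hx : Algebra.trace K L x = 0) :
    ∑ t, χ t * ψ (Algebra.trace K L t) = Fintype.card K * χ x := by
  classical
  have hq : (Fintype.card K - 1 : R) ≠ 0 := by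
    rw [sub_ne_zero]
    exact_mod_cast Fintype.one_lt_card.ne'
  apply mul_left_cancel₀ hq
  rw [card_sub_one_mul_sum_mul_addChar_trace hχ hχK hψ,
    sum_filter_trace_eq_zero hrank hχK hx0 hx]
  ring

end MulChar

theorem stmt8_general (p : ℕ) [Fact p.Prime] (ν : ℕ)
    (F₀ F : Type*) [Field F₀] [Fintype F₀] [Field F] [Fintype F] [DecidableEq F]
    [CharP F p] [Algebra F₀ F]
    (hcard₀ : Fintype.card F₀ = p ^ ν) (hcard : Fintype.card F = p ^ (2 * ν))
    (ψp : AddChar (ZMod p) ℂ) (hψ : ψp ≠ 1)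
    (χ : MulChar F ℂ) (hχ : χ ≠ 1) (hord : orderOf χ ∣ p ^ ν + 1)
    (x : F) (hx : x ≠ 0) (htr : Algebra.trace F₀ F x = 0) :
    (χ x = 1 ∨ χ x = -1) ∧
      ∑ t : Fˣ, χ t * ψp (Algebra.trace (ZMod p) F t) = χ x * (p : ℂ) ^ ν := by
  have : CharP F₀ p := (algebraMap F₀ F).charP (algebraMap F₀ F).injective p
  have : IsScalarTower (ZMod p) F₀ F := .of_algebraMap_eq' (RingHom.ext_zmod _ _)
  have hrank : finrank F₀ F = 2 :=
    finrank_eq_two_of_card_eq_sq (by rw [hcard, hcard₀, pow_mul'])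
  have hχF₀ : ∀ c : F₀, c ≠ 0 → χ (algebraMap F₀ F c) = 1 := fun _ =>
    MulChar.apply_algebraMap_eq_one_of_pow_card_add_one_eq_one hrank
      (by rw [hcard₀, ← orderOf_dvd_iff_pow_eq_one]; exact hord)
  let ψ₀ := ψp.compAddMonoidHom (Algebra.trace (ZMod p) F₀).toAddMonoidHom
  have hψ₀ : ψ₀ ≠ 1 := by
    obtain ⟨a, ha⟩ := AddChar.ne_one_iff.mp hψ
    obtain ⟨s, rfl⟩ := Algebra.trace_surjective (ZMod p) F₀ a
    exact AddChar.ne_one_iff.mpr ⟨s, ha⟩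
  refine ⟨sq_eq_one_iff.mp (MulChar.sq_apply_eq_one_of_trace_eq_zero hrank hχF₀ hx htr), ?_⟩
  calc ∑ t : Fˣ, χ t * ψp (Algebra.trace (ZMod p) F t)
      = ∑ t, χ t * ψ₀ (Algebra.trace F₀ F t) := by
        rw [sum_units_eq_sum_of_map_zero (f := fun t => χ t * ψp (Algebra.trace (ZMod p) F t))
          (by rw [χ.map_zero, zero_mul])]
        simp [ψ₀, Algebra.trace_trace]
    _ = Fintype.card F₀ * χ x :=
        MulChar.sum_mul_addChar_trace_eq_card_mul hrank hχ hχF₀ hψ₀ hx htr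
    _ = χ x * (p : ℂ) ^ ν := by rw [hcard₀, Nat.cast_pow, mul_comm]

/-- Let `p` be an odd prime, `F` the field with `p^{2ν}` elements and `F₀ ⊂ F` its subfield
with `p^ν` elements.  If `χ` is a nontrivial multiplicative character of `F` whose order
divides `p^ν + 1` and `ψ(x) = ψ_p(Tr_{F/F_p}(x))` for a nontrivial additive character `ψ_p`
of `F_p`, then for every `x ∈ F^×` with `Tr_{F/F₀}(x) = 0` one has `χ(x) ∈ {1, −1}` and
`∑_{t ∈ F^×} χ(t)ψ(t) = χ(x)·p^ν`; in particular this Gauss sum equals `p^ν` or `−p^ν`. -/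
theorem stmt8 (p : ℕ) [Fact p.Prime] (hp : p ≠ 2) (ν : ℕ) (hν : 1 ≤ ν)
    (F₀ F : Type*) [Field F₀] [Fintype F₀] [Field F] [Fintype F] [DecidableEq F]
    [CharP F p] [Algebra F₀ F]
    (hcard₀ : Fintype.card F₀ = p ^ ν) (hcard : Fintype.card F = p ^ (2 * ν))
    (ψp : AddChar (ZMod p) ℂ) (hψ : ψp ≠ 1)
    (χ : MulChar F ℂ) (hχ : χ ≠ 1) (hord : orderOf χ ∣ p ^ ν + 1)
    (x : F) (hx : x ≠ 0) (htr : Algebra.trace F₀ F x = 0) :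
    (χ x = 1 ∨ χ x = -1) ∧
      ∑ t : Fˣ, χ t * ψp (Algebra.trace (ZMod p) F t) = χ x * (p : ℂ) ^ ν :=
  stmt8_general p ν F₀ F hcard₀ hcard ψp hψ χ hχ hord x hx htr
end

section
/- For every prime p, the set of primes ℓ for which there exists an integer ν ≥ 1 with ℓ dividing p^ν + 1 is infinite. In other words, there are infinitely many primes that are supersingular for p. -/
/-- For every prime `p`, there are infinitely many primes `ℓ` dividing `p^ν + 1` for some
`ν ≥ 1`; that is, infinitely many primes are supersingular for `p`. -/
theorem stmt12 (p : ℕ) (hp : p.Prime) :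
    {ℓ : ℕ | ℓ.Prime ∧ ∃ ν : ℕ, 1 ≤ ν ∧ ℓ ∣ p ^ ν + 1}.Infinite := by
  have hp2 : 2 ≤ p := hp.two_le
  set N : ℕ → ℕ := fun k => p ^ 2 ^ (k + 1) + 1 with hN
  set M : ℕ → ℕ := fun k => if p = 2 then N k else N k / 2 with hM
  have hNge : ∀ k, 5 ≤ N k := by
    intro k
    have h1 : (2:ℕ) ≤ 2 ^ (k+1) := by
      have := Nat.one_le_two_pow (n := k); simpa [pow_succ] using Nat.mul_le_mul this (le_refl 2)
    have : 2 ^ 2 ≤ p ^ 2 ^ (k+1) :=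
      le_trans (Nat.pow_le_pow_right (by omega) h1) (Nat.pow_le_pow_left hp2 _)
    simp only [hN]; omega
  have hNge' : ∀ k, 10 ≤ N k ∨ p = 2 := by
    intro k
    rcases eq_or_ne p 2 with h | h
    · exact Or.inr h
    · left
      have hp3 : 3 ≤ p := by rcases hp.eq_two_or_odd' with h2 | ho; · omega
                             · rcases ho with ⟨m, hm⟩; omega
      have h1 : (2:ℕ) ≤ 2 ^ (k+1) := by
        have := Nat.one_le_two_pow (n := k); simpa [pow_succ] using Nat.mul_le_mul this (le_refl 2)
      have : 3 ^ 2 ≤ p ^ 2 ^ (k+1) :=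
        le_trans (Nat.pow_le_pow_right (by omega) h1) (Nat.pow_le_pow_left hp3 _)
      simp only [hN]; omega
  -- structure of N k
  have hNmod : ∀ k, p ≠ 2 → N k % 4 = 2 := by
    intro k hne
    have hpodd : Odd p := hp.odd_of_ne_two hne
    have hsq : N k = (p ^ 2 ^ k) ^ 2 + 1 := by
      simp only [hN]
      rw [pow_succ, pow_mul]
    obtain ⟨c, hc⟩ : Odd (p ^ 2 ^ k) := Odd.pow hpodd
    have : (p ^ 2 ^ k) ^ 2 = 4 * (c * c + c) + 1 := by rw [hc]; ring
    omega
  have hModdM : ∀ k, Odd (M k) ∧ 2 ≤ M k ∧ M k ∣ N k := by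
    intro k
    simp only [hM]
    rcases eq_or_ne p 2 with h | h
    · rw [if_pos h]
      refine ⟨?_, by have := hNge k; omega, dvd_refl _⟩
      simp only [hN, h]
      exact Even.add_one ((Nat.even_pow.mpr ⟨even_iff_two_dvd.mpr (dvd_refl 2), by positivity⟩))
    · rw [if_neg h]
      have hm := hNmod k h
      have hge : 10 ≤ N k := (hNge' k).resolve_right h
      constructor
      · rw [Nat.odd_iff]; omega
      constructor
      · omega
      · exact Nat.div_dvd_of_dvd (by omega)
  set f : ℕ → ℕ := fun k => (M k).minFac with hf
  have hfprime : ∀ k, (f k).Prime := fun k => Nat.minFac_prime (by have := (hModdM k).2.1; omega)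
  have hfodd : ∀ k, Odd (f k) := by
    intro k
    rcases (hModdM k).1 with ⟨c, hc⟩
    have hd := Nat.minFac_dvd (M k)
    rcases Nat.even_or_odd (f k) with he | ho
    · exfalso
      have : 2 ∣ M k := dvd_trans (even_iff_two_dvd.mp he) hd
      omega
    · exact ho
  have hfdvd : ∀ k, f k ∣ N k := fun k => dvd_trans (Nat.minFac_dvd _) (hModdM k).2.2
  apply Set.infinite_of_injective_forall_mem (f := f)
  · -- injective
    have key : ∀ j k : ℕ, j < k → f j ≠ f k := by
      intro j k hlt hjk
      set ℓ := f j with hℓ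
      have hℓprime : ℓ.Prime := hfprime j
      have hℓodd : Odd ℓ := hfodd j
      haveI : Fact ℓ.Prime := ⟨hℓprime⟩
      have h1 : ((p : ZMod ℓ)) ^ 2 ^ (j+1) = -1 := by
        have := hfdvd j
        have h0 : ((N j : ℕ) : ZMod ℓ) = 0 := (ZMod.natCast_eq_zero_iff _ _).mpr this
        have : ((p:ZMod ℓ)) ^ 2 ^ (j+1) + 1 = 0 := by
          simpa [hN] using h0
        linear_combination this
      have h2 : ((p : ZMod ℓ)) ^ 2 ^ (k+1) = -1 := by
        have := hfdvd k
        rw [← hjk] at this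
        have h0 : ((N k : ℕ) : ZMod ℓ) = 0 := (ZMod.natCast_eq_zero_iff _ _).mpr this
        have : ((p:ZMod ℓ)) ^ 2 ^ (k+1) + 1 = 0 := by
          simpa [hN] using h0
        linear_combination this
      have hexp : 2 ^ (k+1) = 2 ^ (j+1) * 2 ^ (k - j) := by
        rw [← pow_add]; congr 1; omega
      have h3 : ((p : ZMod ℓ)) ^ 2 ^ (k+1) = 1 := by
        rw [hexp, pow_mul, h1]
        have : Even (2 ^ (k - j)) := by
          have : k - j ≠ 0 := by omega
          exact (Nat.even_pow).mpr ⟨even_two, this⟩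
        exact this.neg_one_pow
      have : (1 : ZMod ℓ) = -1 := h3.symm.trans h2
      have hdvd2 : (ℓ : ℕ) ∣ 2 := by
        have : ((2 : ℕ) : ZMod ℓ) = 0 := by push_cast; linear_combination this
        exact (ZMod.natCast_eq_zero_iff _ _).mp this
      have := Nat.le_of_dvd (by norm_num) hdvd2
      rcases hℓodd with ⟨c, hc⟩
      have := hℓprime.two_le
      omega
    intro j k hjk
    rcases Nat.lt_trichotomy j k with h | h | h
    · exact absurd hjk (key j k h)
    · exact h
    · exact absurd hjk.symm (key k j h)
  · intro k
    exact ⟨hfprime k, 2 ^ (k+1), Nat.one_le_two_pow, hfdvd k⟩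
end

section
/- For every prime p, there exist infinitely many pairs (a, b) of distinct primes, both different from p, such that the integers a·o_p(a) and b·o_p(b) are coprime; that is, the set of such pairs of primes is infinite. -/
/-- For every prime `p`, the set of pairs `(a, b)` of distinct primes, both different from `p`,
with `a·o_p(a)` and `b·o_p(b)` coprime, is infinite. -/
theorem stmt14 (p : ℕ) (hp : p.Prime) :
    {ab : ℕ × ℕ | ab.1.Prime ∧ ab.2.Prime ∧ ab.1 ≠ ab.2 ∧ ab.1 ≠ p ∧ ab.2 ≠ p ∧
      Nat.Coprime (ab.1 * orderOf ((p : ZMod ab.1)))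
        (ab.2 * orderOf ((p : ZMod ab.2)))}.Infinite := by
  set S := {ab : ℕ × ℕ | ab.1.Prime ∧ ab.2.Prime ∧ ab.1 ≠ ab.2 ∧ ab.1 ≠ p ∧ ab.2 ≠ p ∧
      Nat.Coprime (ab.1 * orderOf ((p : ZMod ab.1)))
        (ab.2 * orderOf ((p : ZMod ab.2)))} with hS
  have hp2 : 2 ≤ p := hp.two_le
  -- pick a prime a > p
  obtain ⟨a, hap, ha⟩ := Nat.exists_infinite_primes (p + 1)
  haveI : Fact a.Prime := ⟨ha⟩
  have hpa : p < a := hap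
  have hane : (p : ZMod a) ≠ 0 := by
    rw [Ne, ZMod.natCast_eq_zero_iff]
    exact fun h => absurd (Nat.le_of_dvd hp.pos h) (not_le.2 hpa)
  have horda : 0 < orderOf ((p : ZMod a)) := by
    have h1 : (p : ZMod a) ^ (a - 1) = 1 := ZMod.pow_card_sub_one_eq_one hane
    exact (isOfFinOrder_iff_pow_eq_one.mpr ⟨a - 1, by omega, h1⟩).orderOf_pos
  set m := a * orderOf ((p : ZMod a)) with hm
  have hma : a ≤ m := Nat.le_mul_of_pos_right a horda
  have hm2 : 2 ≤ m := le_trans ha.two_le hma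
  -- key claim: for every bound C there is b > C with (a, b) ∈ S
  have key : ∀ C : ℕ, ∃ b, C < b ∧ (a, b) ∈ S := by
    intro C
    obtain ⟨L, hLge, hL⟩ := Nat.exists_infinite_primes (m + p + C + 1)
    have hLm : m < L := by omega
    have hLp : p < L := by omega
    have hLC : C < L := by omega
    set N := ∑ i ∈ Finset.range L, p ^ i with hN
    have hN2 : 2 ≤ N := by
      have hsub : ({0, 1} : Finset ℕ) ⊆ Finset.range L := by
        intro x hx
        simp only [Finset.mem_insert, Finset.mem_singleton] at hx
        rcases hx with rfl | rfl <;> simp [Finset.mem_range] <;> omega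
      have h01 : ∑ i ∈ ({0, 1} : Finset ℕ), p ^ i = 1 + p := by
        rw [Finset.sum_pair (by norm_num : (0:ℕ) ≠ 1)]; ring
      have hle : (1 + p : ℕ) ≤ N := by
        rw [hN, ← h01]
        exact Finset.sum_le_sum_of_subset hsub
      omega
    set b := N.minFac with hb
    have hbp : b.Prime := Nat.minFac_prime (by omega)
    haveI : Fact b.Prime := ⟨hbp⟩
    have hbN : b ∣ N := Nat.minFac_dvd N
    have hcast : ((N : ℕ) : ZMod b) = 0 := (ZMod.natCast_eq_zero_iff _ _).mpr hbN
    have hsum : (∑ i ∈ Finset.range L, (p : ZMod b) ^ i) = 0 := by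
      rw [hN] at hcast; push_cast at hcast; exact hcast
    have hpow : (p : ZMod b) ^ L = 1 := by
      have := geom_sum_mul (p : ZMod b) L
      rw [hsum, zero_mul] at this
      have := sub_eq_zero.mp this.symm
      linear_combination this
    have hd : orderOf ((p : ZMod b)) ∣ L := orderOf_dvd_of_pow_eq_one hpow
    have hd1 : orderOf ((p : ZMod b)) = 1 ∨ orderOf ((p : ZMod b)) = L :=
      (Nat.Prime.eq_one_or_self_of_dvd hL _ hd)
    have hdL : orderOf ((p : ZMod b)) = L := by
      rcases hd1 with h1 | h
      · exfalso
        have hpb1 : (p : ZMod b) = 1 := orderOf_eq_one_iff.mp h1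
        have hLb : ((L : ℕ) : ZMod b) = 0 := by
          rw [hpb1] at hsum; simpa using hsum
        have hbdvdL : b ∣ L := (ZMod.natCast_eq_zero_iff _ _).mp hLb
        have hbL : b = L := (Nat.prime_dvd_prime_iff_eq hbp hL).mp hbdvdL
        have hpb1' : ((p : ℕ) : ZMod L) = ((1 : ℕ) : ZMod L) := by
          rw [← hbL]; rw [hpb1]; norm_num
        have hmod : p ≡ 1 [MOD L] := (ZMod.natCast_eq_natCast_iff _ _ _).mp hpb1'
        have : L ∣ p - 1 := (Nat.modEq_iff_dvd' (by omega)).mp hmod.symm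
        have := Nat.le_of_dvd (by omega) this
        omega
      · exact h
    have hbne0 : (p : ZMod b) ≠ 0 := by
      intro h0
      rw [h0] at hpow
      rw [zero_pow (by omega : L ≠ 0)] at hpow
      exact zero_ne_one hpow
    have hb1 : (p : ZMod b) ^ (b - 1) = 1 := ZMod.pow_card_sub_one_eq_one hbne0
    have hdvd : L ∣ b - 1 := hdL ▸ orderOf_dvd_of_pow_eq_one hb1
    have hbgt : L < b := by
      have hb2 : 2 ≤ b := hbp.two_le
      have := Nat.le_of_dvd (by omega) hdvd
      omega
    refine ⟨b, by omega, ha, hbp, ?_, ?_, ?_, ?_⟩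
    · -- a ≠ b
      intro h; omega
    · intro h; omega
    · intro h; omega
    · -- coprimality
      show Nat.Coprime m (b * orderOf ((p : ZMod b)))
      rw [hdL]
      have hc1 : Nat.Coprime m b :=
        ((Nat.Prime.coprime_iff_not_dvd hbp).mpr
          (fun h => absurd (Nat.le_of_dvd (by omega) h) (by omega))).symm
      have hc2 : Nat.Coprime m L :=
        ((Nat.Prime.coprime_iff_not_dvd hL).mpr
          (fun h => absurd (Nat.le_of_dvd (by omega) h) (by omega))).symm
      exact Nat.Coprime.mul_right hc1 hc2
  -- conclude infinitude
  by_contra hfin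
  rw [Set.not_infinite] at hfin
  have himg : (Prod.snd '' S).Finite := hfin.image _
  obtain ⟨C, hC⟩ := himg.bddAbove
  obtain ⟨b, hbC, hbS⟩ := key C
  have : b ≤ C := hC ⟨(a, b), hbS, rfl⟩
  omega
end

section
/- Let p be a prime, let q = p^m with m ≥ 1, and let n ≥ 1 be an integer. Then the number of elements α of the finite field F_q such that α = β^n for some β ∈ F_q^× and such that α lies in no proper subfield of F_q (i.e. α^{p^k} ≠ α for every 1 ≤ k < m) is at least (q − 1)/n − (p·√q − 1)/(p − 1). -/
open scoped Classical

open Polynomial Finset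

private lemma aux_pow_mul {F : Type*} [CommRing F] (p a : ℕ) (α : F)
    (h : α ^ p ^ a = α) : ∀ c, α ^ p ^ (a * c) = α := by
  intro c
  induction c with
  | zero => simp
  | succ c ih => rw [Nat.mul_succ, pow_add, pow_mul, ih, h]

private lemma aux_frob_inj {F : Type*} [Field F] (p : ℕ) [Fact p.Prime] [CharP F p]
    (j : ℕ) {x y : F} (h : x ^ p ^ j = y ^ p ^ j) : x = y := by
  have h0 : (x - y) ^ p ^ j = 0 := by
    rw [sub_pow_char_pow, h, sub_self]
  have := pow_eq_zero_iff (pow_ne_zero j (Fact.out (p := p.Prime)).ne_zero) |>.mp h0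
  exact sub_eq_zero.mp this

private lemma aux_gcd {F : Type*} [Field F] (p : ℕ) [Fact p.Prime] [CharP F p] :
    ∀ a b : ℕ, ∀ α : F, α ^ p ^ a = α → α ^ p ^ b = α → α ^ p ^ (Nat.gcd a b) = α := by
  intro a b
  induction a, b using Nat.gcd.induction with
  | H0 n => intro α _ h2; simpa using h2
  | H1 a b ha ih =>
    intro α h1 h2
    rw [Nat.gcd_rec]
    refine ih α ?_ h1
    apply aux_frob_inj p (a * (b / a))
    have e1 : (α ^ p ^ (b % a)) ^ p ^ (a * (b / a)) = α ^ p ^ b := by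
      rw [← pow_mul, ← pow_add, Nat.mod_add_div]
    rw [e1, h2, aux_pow_mul p a α h1 (b / a)]

private lemma card_filter_le_natDegree {F : Type*} [Field F] [Fintype F]
    (f : Polynomial F) (hf : f ≠ 0) (P : F → Prop) [DecidablePred P]
    (hP : ∀ x, P x → f.eval x = 0) :
    (Finset.univ.filter P).card ≤ f.natDegree := by
  refine le_trans ?_ (Polynomial.card_roots' f)
  refine le_trans (Finset.card_le_card (t := f.roots.toFinset) ?_) (Multiset.toFinset_card_le _)
  intro x hx
  rw [Finset.mem_filter] at hx
  rw [Multiset.mem_toFinset, Polynomial.mem_roots hf]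
  exact hP x hx.2

/-- In the field `F` with `q = p^m` elements, the number of elements `α` that are `n`-th powers
of nonzero elements and lie in no proper subfield of `F` is at least
`(q − 1)/n − (p·√q − 1)/(p − 1)`. -/
theorem stmt15 (p : ℕ) (hp : p.Prime) (m : ℕ) (hm : 1 ≤ m) (q : ℕ) (hq : q = p ^ m)
    (n : ℕ) (hn : 1 ≤ n)
    (F : Type*) [Field F] [Fintype F] (hF : Fintype.card F = q) :
    ((q : ℝ) - 1) / n - ((p : ℝ) * Real.sqrt q - 1) / ((p : ℝ) - 1) ≤
      ((Finset.univ.filter (fun α : F =>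
        (∃ β : F, β ≠ 0 ∧ β ^ n = α) ∧
          ∀ k : ℕ, 1 ≤ k → k < m → α ^ p ^ k ≠ α)).card : ℝ) := by
  haveI : Fact p.Prime := ⟨hp⟩
  -- characteristic
  haveI hcp : CharP F p := by
    haveI : CharP F (ringChar F) := ringChar.charP F
    obtain ⟨n', hr, hcard⟩ := FiniteField.card F (ringChar F)
    have hdvd : ringChar F ∣ p ^ m := by
      rw [← hq, ← hF, hcard]; exact dvd_pow_self _ n'.2.ne'
    have : ringChar F = p := by
      have := hr.dvd_of_dvd_pow hdvd
      exact (Nat.prime_dvd_prime_iff_eq hr hp).mp this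
    rwa [← this]
  have hp1 : (1 : ℝ) < p := by exact_mod_cast hp.one_lt
  have hq2 : (2 : ℕ) ≤ q := by
    rw [hq]; calc 2 ≤ p := hp.two_le
    _ ≤ p ^ m := Nat.le_self_pow (by omega) p
  set S := (Finset.univ.filter (fun α : F =>
        (∃ β : F, β ≠ 0 ∧ β ^ n = α) ∧
          ∀ k : ℕ, 1 ≤ k → k < m → α ^ p ^ k ≠ α)) with hS
  set A := (Finset.univ.filter (fun α : F => ∃ β : F, β ≠ 0 ∧ β ^ n = α)) with hA
  set B := (Finset.univ.filter (fun α : F => ∃ k, 1 ≤ k ∧ k ≤ m / 2 ∧ α ^ p ^ k = α)) with hB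
  -- Claim 1 : (q-1) ≤ n * A.card
  have claim1 : (q : ℝ) - 1 ≤ (n : ℝ) * A.card := by
    have h1 : (Finset.univ.erase (0 : F)).card ≤ n * A.card := by
      have := Finset.card_le_mul_card_image (s := Finset.univ.erase (0 : F))
        (f := fun β : F => β ^ n) n ?_
      · refine le_trans this (Nat.mul_le_mul_left n (Finset.card_le_card ?_))
        intro a ha
        rw [Finset.mem_image] at ha
        obtain ⟨β, hβ, rfl⟩ := ha
        rw [hA, Finset.mem_filter]
        exact ⟨Finset.mem_univ _, β, Finset.ne_of_mem_erase hβ, rfl⟩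
      · intro a _
        refine le_trans (Finset.card_le_card (Finset.filter_subset_filter _
          (Finset.subset_univ _))) ?_
        have := card_filter_le_natDegree (X ^ n - C a) (X_pow_sub_C_ne_zero hn a)
          (fun β : F => β ^ n = a) ?_
        · rwa [natDegree_X_pow_sub_C] at this
        · intro x hx; simp [hx]
    have h2 : (Finset.univ.erase (0 : F)).card = q - 1 := by
      rw [Finset.card_erase_of_mem (Finset.mem_univ _), Finset.card_univ, hF]
    rw [h2] at h1
    have := (Nat.cast_le (α := ℝ)).mpr h1
    push_cast [Nat.cast_sub (by omega : 1 ≤ q)] at this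
    linarith
  -- Claim 2 on B
  have claim2 : (B.card : ℝ) ≤ ((p : ℝ) * Real.sqrt q - 1) / ((p : ℝ) - 1) := by
    have hsub : B ⊆ (Finset.Icc 1 (m / 2)).biUnion
        (fun k => Finset.univ.filter (fun α : F => α ^ p ^ k = α)) := by
      intro α hα
      rw [hB, Finset.mem_filter] at hα
      obtain ⟨_, k, hk1, hk2, hk3⟩ := hα
      rw [Finset.mem_biUnion]
      exact ⟨k, Finset.mem_Icc.mpr ⟨hk1, hk2⟩, Finset.mem_filter.mpr ⟨Finset.mem_univ _, hk3⟩⟩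
    have hcardk : ∀ k ∈ Finset.Icc 1 (m / 2),
        (Finset.univ.filter (fun α : F => α ^ p ^ k = α)).card ≤ p ^ k := by
      intro k hk
      have hk1 : 1 ≤ k := (Finset.mem_Icc.mp hk).1
      have hdeg : 2 ≤ p ^ k := by
        calc 2 ≤ p := hp.two_le
        _ = p ^ 1 := (pow_one p).symm
        _ ≤ p ^ k := Nat.pow_le_pow_right hp.pos hk1
      have hne : (X ^ p ^ k - X : Polynomial F) ≠ 0 := by
        intro h
        have : (X ^ p ^ k - X : Polynomial F).coeff (p ^ k) = 1 := by
          rw [coeff_sub, coeff_X_pow, coeff_X, if_pos rfl, if_neg (by omega), sub_zero]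
        rw [h] at this; simp at this
      have hd : (X ^ p ^ k - X : Polynomial F).natDegree = p ^ k := by
        rw [natDegree_sub_eq_left_of_natDegree_lt] <;>
          simp [natDegree_X_pow, natDegree_X] <;> omega
      have := card_filter_le_natDegree (X ^ p ^ k - X : Polynomial F) hne
        (fun α : F => α ^ p ^ k = α) ?_
      · rwa [hd] at this
      · intro x hx; simp [hx]
    have hBle : B.card ≤ ∑ k ∈ Finset.Icc 1 (m / 2), p ^ k :=
      le_trans (Finset.card_le_card hsub)
        (le_trans (Finset.card_biUnion_le) (Finset.sum_le_sum hcardk))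
    have hsum : ((∑ k ∈ Finset.Icc 1 (m / 2), p ^ k : ℕ) : ℝ) =
        ((p : ℝ) ^ (m / 2 + 1) - p) / ((p : ℝ) - 1) := by
      push_cast
      rw [eq_div_iff (by linarith)]
      have : (Finset.Icc 1 (m / 2)) = Finset.range (m / 2 + 1) \ {0} := by
        ext x; simp [Nat.lt_succ_iff]; omega
      rw [this, Finset.sum_sdiff_eq_sub (by simp), sub_mul, geom_sum_mul]
      simp
    have hsqrt : (p : ℝ) ^ (m / 2) ≤ Real.sqrt q := by
      have h1 : (p : ℝ) ^ (m / 2) = Real.sqrt (((p:ℝ) ^ (m / 2)) ^ 2) :=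
        (Real.sqrt_sq (by positivity)).symm
      rw [h1]
      apply Real.sqrt_le_sqrt
      rw [← pow_mul]
      calc (p : ℝ) ^ (m / 2 * 2) ≤ (p : ℝ) ^ m :=
        pow_le_pow_right₀ (by linarith) (by omega)
      _ = q := by rw [hq]; push_cast; ring
    calc (B.card : ℝ) ≤ ((∑ k ∈ Finset.Icc 1 (m / 2), p ^ k : ℕ) : ℝ) := by exact_mod_cast hBle
    _ = ((p : ℝ) ^ (m / 2 + 1) - p) / ((p : ℝ) - 1) := hsum
    _ ≤ ((p : ℝ) * Real.sqrt q - 1) / ((p : ℝ) - 1) := by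
        have hnum : (p:ℝ) ^ (m / 2 + 1) - p ≤ (p:ℝ) * Real.sqrt q - 1 := by
          have hmul := mul_le_mul_of_nonneg_left hsqrt
            (le_of_lt (lt_trans zero_lt_one hp1))
          have hre : (p:ℝ) ^ (m / 2 + 1) = p * (p:ℝ) ^ (m / 2) := by ring
          linarith
        exact (div_le_div_iff_of_pos_right (by linarith)).mpr hnum
  -- Claim 3 : A \ B ⊆ S
  have claim3 : A \ B ⊆ S := by
    intro α hα
    rw [Finset.mem_sdiff, hA, hB, Finset.mem_filter, Finset.mem_filter] at hα
    obtain ⟨⟨_, hpow⟩, hnb⟩ := hα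
    rw [hS, Finset.mem_filter]
    refine ⟨Finset.mem_univ _, hpow, ?_⟩
    intro k hk1 hk2 hfix
    apply hnb
    refine ⟨Finset.mem_univ _, Nat.gcd k m, ?_, ?_, ?_⟩
    · have : Nat.gcd k m ≠ 0 := Nat.gcd_ne_zero_left (by omega)
      omega
    · -- gcd k m is a proper divisor of m, hence ≤ m/2
      have hdvd : Nat.gcd k m ∣ m := Nat.gcd_dvd_right k m
      have hne : Nat.gcd k m ≠ m := by
        intro h
        have : m ∣ k := h ▸ Nat.gcd_dvd_left k m
        have := Nat.le_of_dvd (by omega) this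
        omega
      obtain ⟨t, ht⟩ := hdvd
      have ht2 : 2 ≤ t := by
        rcases Nat.lt_or_ge t 2 with h | h
        · interval_cases t <;> omega
        · exact h
      have h2g : Nat.gcd k m * 2 ≤ Nat.gcd k m * t := Nat.mul_le_mul_left _ ht2
      omega
    · have hm' : α ^ p ^ m = α := by
        have := FiniteField.pow_card α
        rwa [hF, hq] at this
      exact aux_gcd p k m α hfix hm'
  -- assemble
  have hAB : (A.card : ℝ) - B.card ≤ ((A \ B).card : ℝ) := by
    have h1 : A.card ≤ (A \ B).card + B.card := by
      have : A ⊆ (A \ B) ∪ B := by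
        intro x hx
        by_cases hxB : x ∈ B
        · exact Finset.mem_union_right _ hxB
        · exact Finset.mem_union_left _ (Finset.mem_sdiff.mpr ⟨hx, hxB⟩)
      exact le_trans (Finset.card_le_card this) (Finset.card_union_le _ _)
    have := (Nat.cast_le (α := ℝ)).mpr h1
    push_cast at this
    linarith
  have hScard : ((A \ B).card : ℝ) ≤ (S.card : ℝ) := by
    exact_mod_cast Finset.card_le_card claim3
  have hAcard : ((q : ℝ) - 1) / n ≤ (A.card : ℝ) := by
    rw [div_le_iff₀ (by exact_mod_cast hn : (0:ℝ) < n)] at *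
    nlinarith [claim1]
  linarith
end

section
/- Let a and b be coprime positive integers, and define the rational number D = Σ_{(i,j)} (ab − bi − aj)/(ab), where the sum is over all pairs of positive integers (i, j) with bi + aj < ab. Then (ab − a − b)³/(6·a²·b²) < D < ab/6. -/
open Finset

-- Gauss-type closed form
lemma sum_linear (C A : ℚ) (m : ℕ) :
    ∑ j ∈ Icc 1 m, (C - A * j) = m * C - A * (m * (m + 1)) / 2 := by
  induction m with
  | zero => simp
  | succ n ih =>
      rw [Finset.sum_Icc_succ_top (by omega), ih]
      push_cast
      ring

lemma sum_id' (n : ℕ) : ∑ i ∈ Icc 1 n, (i : ℚ) = n * (n + 1) / 2 := by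
  induction n with
  | zero => simp
  | succ n ih =>
      rw [Finset.sum_Icc_succ_top (by omega), ih]
      push_cast; ring

lemma sum_sq' (n : ℕ) : ∑ i ∈ Icc 1 n, (i : ℚ)^2 = n * (n + 1) * (2*n+1) / 6 := by
  induction n with
  | zero => simp
  | succ n ih =>
      rw [Finset.sum_Icc_succ_top (by omega), ih]
      push_cast; ring

lemma sum_mod (a b : ℕ) (ha : 0 < a) (hab : Nat.Coprime a b) (f : ℕ → ℚ) :
    ∑ i ∈ Icc 1 (a-1), f (b * i % a) = ∑ i ∈ Icc 1 (a-1), f i := by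
  have hinj : ∀ x ∈ Icc 1 (a-1), ∀ y ∈ Icc 1 (a-1),
      b * x % a = b * y % a → x = y := by
    intro x hx y hy h
    simp only [mem_Icc] at hx hy
    have hm : b * x ≡ b * y [MOD a] := h
    have : x ≡ y [MOD a] := hm.cancel_left_of_coprime (by
      simpa [Nat.Coprime, Nat.gcd_comm] using hab)
    have hx' : x % a = x := Nat.mod_eq_of_lt (by omega)
    have hy' : y % a = y := Nat.mod_eq_of_lt (by omega)
    unfold Nat.ModEq at this
    omega
  have hmem : ∀ i ∈ Icc 1 (a-1), b * i % a ∈ Icc 1 (a-1) := by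
    intro i hi
    simp only [mem_Icc] at hi ⊢
    have h1 : b * i % a < a := Nat.mod_lt _ ha
    have h2 : b * i % a ≠ 0 := by
      intro h0
      have hdvd : a ∣ b * i := Nat.dvd_of_mod_eq_zero h0
      have : a ∣ i := (Nat.Coprime.dvd_of_dvd_mul_left hab hdvd)
      have := Nat.le_of_dvd (by omega) this
      omega
    omega
  have himg : (Icc 1 (a-1)).image (fun i => b * i % a) = Icc 1 (a-1) := by
    apply Finset.eq_of_subset_of_card_le
    · intro x hx
      simp only [mem_image] at hx
      obtain ⟨i, hi, rfl⟩ := hx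
      exact hmem i hi
    · rw [Finset.card_image_of_injOn hinj]
  calc ∑ i ∈ Icc 1 (a-1), f (b * i % a)
      = ∑ x ∈ (Icc 1 (a-1)).image (fun i => b * i % a), f x :=
        (Finset.sum_image hinj).symm
    _ = ∑ i ∈ Icc 1 (a-1), f i := by rw [himg]

lemma sum_reflect (a : ℕ) (f : ℕ → ℚ) :
    ∑ i ∈ Icc 1 (a-1), f i = ∑ i ∈ Icc 1 (a-1), f (a - i) := by
  apply Finset.sum_nbij' (fun i => a - i) (fun i => a - i) <;>
    (intro x hx; simp only [mem_Icc] at *) <;> first | omega | (congr 1; omega)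


lemma qr_facts (a b i : ℕ) (ha : 0 < a) (hb : 0 < b) (hab : Nat.Coprime a b)
    (hi1 : 1 ≤ i) (hi2 : i ≤ a - 1) :
    1 ≤ b * i % a ∧ b * i % a ≤ a - 1 ∧ b * i = a * (b * i / a) + b * i % a
      ∧ b * i / a ≤ b - 1 := by
  have h1 : b * i % a < a := Nat.mod_lt _ ha
  have h2 : b * i % a ≠ 0 := by
    intro h0
    have hdvd : a ∣ b * i := Nat.dvd_of_mod_eq_zero h0
    have : a ∣ i := Nat.Coprime.dvd_of_dvd_mul_left hab hdvd
    have := Nat.le_of_dvd (by omega) this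
    omega
  have h3 : b * i / a < b := by
    rw [Nat.div_lt_iff_lt_mul ha]
    have h4 : b * i ≤ b * (a-1) := Nat.mul_le_mul_left b hi2
    have h5 : b * (a-1) + b = b * a := by
      calc b * (a-1) + b = b * ((a-1) + 1) := by ring
        _ = b * a := by congr 1; omega
    omega
  exact ⟨by omega, by omega, (Nat.div_add_mod (b*i) a).symm, by omega⟩

lemma qr_reflect (a b i q r : ℕ) (ha : 0 < a) (hb : 0 < b) (hi2 : i ≤ a - 1)
    (hqr : b * i = a * q + r) (hr1 : 1 ≤ r) (hr2 : r ≤ a - 1) (hqb : q ≤ b - 1) :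
    b * (a - i) / a = b - 1 - q ∧ b * (a - i) % a = a - r := by
  have e1 : b * (a - i) + b * i = a * b := by
    have h : (a - i) + i = a := by omega
    calc b * (a-i) + b * i = b * ((a-i) + i) := by ring
      _ = a * b := by rw [h]; ring
  have e2 : a * (b-1-q) + a * q + a = a * b := by
    have h : (b-1-q) + q + 1 = b := by omega
    calc a*(b-1-q) + a*q + a = a*((b-1-q)+q+1) := by ring
      _ = a*b := by rw [h]
  have key : b * (a - i) = a * (b - 1 - q) + (a - r) := by omega
  constructor
  · rw [key, Nat.mul_add_div ha, Nat.div_eq_of_lt (by omega), add_zero]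
  · rw [key, Nat.mul_add_mod, Nat.mod_eq_of_lt (by omega)]

lemma filter_eq' (a b i q r : ℕ) (ha : 0 < a) (hb : 0 < b)
    (hqr : b * i = a * q + r) (hr1 : 1 ≤ r) (hr2 : r ≤ a - 1) (hqb : q ≤ b - 1) :
    (Icc 1 b).filter (fun j => b * i + a * j < a * b) = Icc 1 (b - 1 - q) := by
  have e2 : a * (b-1-q) + a * q + a = a * b := by
    have h : (b-1-q) + q + 1 = b := by omega
    calc a*(b-1-q) + a*q + a = a*((b-1-q)+q+1) := by ring
      _ = a*b := by rw [h]
  ext j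
  simp only [mem_filter, mem_Icc]
  constructor
  · rintro ⟨⟨h1, h2⟩, h3⟩
    refine ⟨h1, ?_⟩
    by_contra hcon
    push_neg at hcon
    have hjq : b - 1 - q + 1 ≤ j := hcon
    have hmul : a * (b - 1 - q + 1) ≤ a * j := Nat.mul_le_mul_left a hjq
    have hexp : a * (b - 1 - q + 1) = a * (b-1-q) + a := by ring
    omega
  · rintro ⟨h1, h2⟩
    have hjb : j ≤ b := by omega
    refine ⟨⟨h1, hjb⟩, ?_⟩
    have hmul : a * j ≤ a * (b-1-q) := Nat.mul_le_mul_left a h2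
    omega

lemma filter_eq_top (a b : ℕ) (ha : 0 < a) (hb : 0 < b) :
    (Icc 1 b).filter (fun j => b * a + a * j < a * b) = Icc 1 (b - 1 - b * a / a) := by
  have hdiv : b * a / a = b := by
    rw [mul_comm]; exact Nat.mul_div_cancel_left b ha
  rw [hdiv]
  have h2 : (Icc 1 (b - 1 - b) : Finset ℕ) = ∅ := by
    have : b - 1 - b = 0 := by omega
    rw [this]; simp
  rw [h2]
  apply Finset.filter_false_of_mem
  intro j hj
  simp only [not_lt]
  have hc : b * a = a * b := mul_comm b a
  omega

lemma keyT (a b : ℕ) (ha : 0 < a) (hb : 0 < b) (hab : Nat.Coprime a b) :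
    ∑ i ∈ Icc 1 a, ∑ j ∈ (Icc 1 b).filter (fun j => b * i + a * j < a * b),
      ((a:ℚ)*b - b*i - a*j)
    = ((a:ℚ)-1)*((b:ℚ)-1)*(2*(a:ℚ)*b-a-b-1)/12 := by
  have ha' : (a:ℚ) ≠ 0 := Nat.cast_ne_zero.2 (by omega)
  -- Step 1: inner sums in closed form
  have hstep1 : ∀ i ∈ Icc 1 a,
      ∑ j ∈ (Icc 1 b).filter (fun j => b * i + a * j < a * b), ((a:ℚ)*b - b*i - a*j)
      = ((b-1-b*i/a : ℕ):ℚ) * ((a:ℚ)*b - b*i)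
          - (a:ℚ) * (((b-1-b*i/a : ℕ):ℚ) * (((b-1-b*i/a : ℕ):ℚ) + 1)) / 2 := by
    intro i hi
    simp only [mem_Icc] at hi
    have hfil : (Icc 1 b).filter (fun j => b * i + a * j < a * b)
        = Icc 1 (b-1-b*i/a) := by
      rcases eq_or_lt_of_le hi.2 with heq | hlt
      · subst heq
        exact filter_eq_top i b ha hb
      · obtain ⟨hr1, hr2, hqr, hqb⟩ := qr_facts a b i ha hb hab hi.1 (by omega)
        exact filter_eq' a b i (b*i/a) (b*i%a) ha hb hqr hr1 hr2 hqb
    rw [hfil]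
    calc ∑ j ∈ Icc 1 (b-1-b*i/a), ((a:ℚ)*b - b*i - a*j)
        = ∑ j ∈ Icc 1 (b-1-b*i/a), (((a:ℚ)*b - (b:ℚ)*i) - (a:ℚ)*j) := by
          apply Finset.sum_congr rfl; intros; ring
      _ = _ := sum_linear _ _ _
  rw [Finset.sum_congr rfl hstep1]
  -- Step 2: drop i = a
  have hsplit : Icc 1 a = insert a (Icc 1 (a-1)) := by
    ext x; simp only [mem_Icc, mem_insert]; omega
  rw [hsplit, Finset.sum_insert (by simp only [mem_Icc]; omega)]
  have htop0 : b - 1 - b*a/a = 0 := by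
    have hdiv : b * a / a = b := by
      rw [mul_comm]; exact Nat.mul_div_cancel_left b ha
    omega
  rw [htop0]
  push_cast [Nat.cast_zero]
  rw [show ((0:ℚ) * ((a:ℚ)*b - b*a) - (a:ℚ)*((0:ℚ)*(0+1))/2) = 0 by ring, zero_add]
  -- Main computation over Icc 1 (a-1)
  set F : ℕ → ℚ := fun i =>
      ((b-1-b*i/a : ℕ):ℚ) * ((a:ℚ)*b - b*i)
        - (a:ℚ) * (((b-1-b*i/a : ℕ):ℚ) * (((b-1-b*i/a : ℕ):ℚ) + 1)) / 2 with hF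
  have hpoint : ∀ i ∈ Icc 1 (a-1), (a:ℚ) * (F i + F (a - i))
      = (a:ℚ)^2*b*((b:ℚ)-1)/2 - (a:ℚ)*(b:ℚ)^2*i + (a:ℚ)*((b*i%a : ℕ):ℚ)
          + (b:ℚ)^2*(i:ℚ)^2 - ((b*i%a : ℕ):ℚ)^2 := by
    intro i hi
    simp only [mem_Icc] at hi
    obtain ⟨hr1, hr2, hqr, hqb⟩ := qr_facts a b i ha hb hab hi.1 hi.2
    obtain ⟨hd, hm⟩ := qr_reflect a b i (b*i/a) (b*i%a) ha hb hi.2 hqr hr1 hr2 hqb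
    rw [hF]
    simp only
    rw [hd]
    rw [show b - 1 - (b - 1 - b*i/a) = b*i/a from Nat.sub_sub_self hqb]
    have hcast : (b:ℚ) * i = (a:ℚ) * ((b*i/a : ℕ):ℚ) + ((b*i%a : ℕ):ℚ) := by
      exact_mod_cast congrArg (Nat.cast : ℕ → ℚ) hqr
    have hai : ((a - i : ℕ):ℚ) = (a:ℚ) - i := by
      rw [Nat.cast_sub (by omega)]
    have hbq : ((b - 1 - b*i/a : ℕ):ℚ) = (b:ℚ) - 1 - ((b*i/a:ℕ):ℚ) := by
      rw [Nat.cast_sub (by omega), Nat.cast_sub (by omega), Nat.cast_one]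
    rw [hai, hbq]
    linear_combination ((a:ℚ) + (a:ℚ)*((b*i/a:ℕ):ℚ) - ((b*i%a:ℕ):ℚ) - (b:ℚ)*i) * hcast
  have main : (a:ℚ) * (2 * ∑ i ∈ Icc 1 (a-1), F i)
      = ∑ i ∈ Icc 1 (a-1), (a:ℚ) * (F i + F (a - i)) := by
    rw [← Finset.mul_sum, Finset.sum_add_distrib, ← sum_reflect a F]
    ring
  rw [Finset.sum_congr rfl hpoint] at main
  have hR1 : ∑ i ∈ Icc 1 (a-1), ((b*i%a:ℕ):ℚ) = ∑ i ∈ Icc 1 (a-1), (i:ℚ) :=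
    sum_mod a b ha hab (fun x => (x:ℚ))
  have hR2 : ∑ i ∈ Icc 1 (a-1), ((b*i%a:ℕ):ℚ)^2 = ∑ i ∈ Icc 1 (a-1), (i:ℚ)^2 :=
    sum_mod a b ha hab (fun x => (x:ℚ)^2)
  have hS1 : ∑ i ∈ Icc 1 (a-1), (i:ℚ) = ((a:ℚ)-1)*(a:ℚ)/2 := by
    rw [sum_id', Nat.cast_sub (by omega : 1 ≤ a), Nat.cast_one]; ring
  have hS2 : ∑ i ∈ Icc 1 (a-1), (i:ℚ)^2 = ((a:ℚ)-1)*(a:ℚ)*(2*(a:ℚ)-1)/6 := by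
    rw [sum_sq', Nat.cast_sub (by omega : 1 ≤ a), Nat.cast_one]; ring
  have hcard : ((Icc 1 (a-1)).card : ℚ) = (a:ℚ) - 1 := by
    rw [Nat.card_Icc, show a - 1 + 1 - 1 = a - 1 from by omega,
      Nat.cast_sub (by omega : 1 ≤ a), Nat.cast_one]
  have main2 : (a:ℚ) * (2 * ∑ i ∈ Icc 1 (a-1), F i)
      = ((a:ℚ)-1) * ((a:ℚ)^2*b*((b:ℚ)-1)/2)
        - (a:ℚ)*(b:ℚ)^2 * (((a:ℚ)-1)*(a:ℚ)/2)
        + (a:ℚ) * (((a:ℚ)-1)*(a:ℚ)/2)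
        + (b:ℚ)^2 * (((a:ℚ)-1)*(a:ℚ)*(2*(a:ℚ)-1)/6)
        - ((a:ℚ)-1)*(a:ℚ)*(2*(a:ℚ)-1)/6 := by
    rw [main]
    simp only [Finset.sum_add_distrib, Finset.sum_sub_distrib, ← Finset.mul_sum,
      Finset.sum_const, nsmul_eq_mul]
    rw [hR1, hR2, hS1, hS2, hcard]
  have h2a : (2*(a:ℚ)) ≠ 0 := by
    simp [ha']
  apply mul_left_cancel₀ h2a
  linear_combination main2


/-- For coprime positive integers `a`, `b`, the rational number
`D = ∑_{(i,j) : i,j ≥ 1, bi + aj < ab} (ab − bi − aj)/(ab)` satisfies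
`(ab − a − b)³/(6a²b²) < D < ab/6`. -/
theorem stmt16 (a b : ℕ) (ha : 0 < a) (hb : 0 < b) (hab : Nat.Coprime a b)
    (D : ℚ)
    (hD : D = ∑ ij ∈ (Finset.Icc 1 a ×ˢ Finset.Icc 1 b).filter
        (fun ij => b * ij.1 + a * ij.2 < a * b),
        (((a : ℚ) * b - b * ij.1 - a * ij.2) / ((a : ℚ) * b))) :
    ((a : ℚ) * b - a - b) ^ 3 / (6 * (a : ℚ) ^ 2 * (b : ℚ) ^ 2) < D ∧
      D < (a : ℚ) * b / 6 := by
  have hA : (1:ℚ) ≤ (a:ℚ) := by exact_mod_cast ha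
  have hB : (1:ℚ) ≤ (b:ℚ) := by exact_mod_cast hb
  have hABpos : (0:ℚ) < (a:ℚ) * b := by positivity
  have hDval : D = (((a:ℚ)-1)*((b:ℚ)-1)*(2*(a:ℚ)*b-(a:ℚ)-(b:ℚ)-1)/12) / ((a:ℚ)*b) := by
    rw [hD, ← Finset.sum_div]
    congr 1
    rw [← keyT a b ha hb hab, Finset.sum_filter, Finset.sum_product]
    apply Finset.sum_congr rfl
    intro i _
    rw [Finset.sum_filter]
  constructor
  · -- lower bound
    rcases Nat.lt_or_ge a 2 with h1 | h1
    · -- a = 1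
      have ha1 : a = 1 := by omega
      subst ha1
      have hD0 : D = 0 := by rw [hDval]; norm_num
      rw [hD0]
      apply div_neg_of_neg_of_pos
      · have e : ((1:ℕ):ℚ) * b - ((1:ℕ):ℚ) - b = -1 := by push_cast; ring
        rw [e]; norm_num
      · positivity
    rcases Nat.lt_or_ge b 2 with h2 | h2
    · -- b = 1
      have hb1 : b = 1 := by omega
      subst hb1
      have hD0 : D = 0 := by rw [hDval]; norm_num
      rw [hD0]
      apply div_neg_of_neg_of_pos
      · have e : (a:ℚ) * ((1:ℕ):ℚ) - a - ((1:ℕ):ℚ) = -1 := by push_cast; ring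
        rw [e]; norm_num
      · positivity
    -- 2 ≤ a, 2 ≤ b; not both equal 2
    have h3 : 3 ≤ a ∨ 3 ≤ b := by
      by_contra hcon
      push_neg at hcon
      have : a = 2 ∧ b = 2 := by omega
      rw [this.1, this.2] at hab
      norm_num [Nat.Coprime] at hab
    have hA2 : (2:ℚ) ≤ (a:ℚ) := by exact_mod_cast h1
    have hB2 : (2:ℚ) ≤ (b:ℚ) := by exact_mod_cast h2
    have h3' : (3:ℚ) ≤ (a:ℚ) ∨ (3:ℚ) ≤ (b:ℚ) := by
      rcases h3 with h | h
      · left; exact_mod_cast h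
      · right; exact_mod_cast h
    have hF1 : (1:ℚ) ≤ (a:ℚ)*b - a - b := by
      rcases h3' with h | h <;> nlinarith
    have hs : (4:ℚ) ≤ (a:ℚ) + b := by linarith
    rw [hDval, div_lt_div_iff₀ (by positivity) hABpos]
    nlinarith [mul_pos hABpos hABpos, sq_nonneg ((a:ℚ)*b - a - b),
      mul_le_mul_of_nonneg_left hs (by nlinarith : (0:ℚ) ≤ ((a:ℚ)*b-a-b)^2),
      mul_le_mul_of_nonneg_left hs (by nlinarith : (0:ℚ) ≤ ((a:ℚ)*b-a-b)*((a:ℚ)+b)),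
      mul_le_mul_of_nonneg_left hF1 (by nlinarith : (0:ℚ) ≤ ((a:ℚ)*b-a-b)),
      mul_pos (mul_pos hABpos hABpos) hABpos]
  · -- upper bound
    rw [hDval, div_lt_div_iff₀ hABpos (by norm_num : (0:ℚ) < 6)]
    have hA1 : (0:ℚ) ≤ (a:ℚ) - 1 := by linarith
    have hB1 : (0:ℚ) ≤ (b:ℚ) - 1 := by linarith
    have hsum : (0:ℚ) < (a:ℚ) + b - 1 := by linarith
    have hsum2 : (0:ℚ) ≤ (a:ℚ) + b + 1 := by linarith
    nlinarith [mul_pos hABpos hsum, mul_nonneg (mul_nonneg hA1 hB1) hsum2]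
end

section
/- Let a, b ≥ 2 be coprime integers and let q be a positive integer coprime to ab. Define E = Σ_{(i,j)} (⌈q(ab − bi − aj)/(ab)⌉ − q(ab − bi − aj)/(ab)), where the sum is over all pairs of positive integers (i, j) with bi + aj < ab. Then 0 < E < (a−1)(b−1)/2. -/
open Finset

lemma card_lemma (a b : ℕ) (ha : 2 ≤ a) (hb : 2 ≤ b) (hab : Nat.Coprime a b) :
    2 * ((Finset.Icc 1 a ×ˢ Finset.Icc 1 b).filter
        (fun ij => b * ij.1 + a * ij.2 < a * b)).card = (a - 1) * (b - 1) := by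
  set P := Finset.Icc 1 a ×ˢ Finset.Icc 1 b with hP
  set S := P.filter (fun ij => b * ij.1 + a * ij.2 < a * b) with hS
  set S' := P.filter (fun ij => a * b < b * ij.1 + a * ij.2 ∧ ij.1 < a ∧ ij.2 < b) with hS'
  set U := P.filter (fun ij => ij.1 < a ∧ ij.2 < b) with hU
  -- membership characterizations
  have memS : ∀ ij : ℕ × ℕ, ij ∈ S ↔ 1 ≤ ij.1 ∧ ij.1 ≤ a ∧ 1 ≤ ij.2 ∧ ij.2 ≤ b ∧
      b * ij.1 + a * ij.2 < a * b := by
    intro ij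
    simp [hS, hP, Finset.mem_filter, Finset.mem_product, and_assoc]
  have memS' : ∀ ij : ℕ × ℕ, ij ∈ S' ↔ 1 ≤ ij.1 ∧ ij.1 ≤ a ∧ 1 ≤ ij.2 ∧ ij.2 ≤ b ∧
      (a * b < b * ij.1 + a * ij.2 ∧ ij.1 < a ∧ ij.2 < b) := by
    intro ij
    simp [hS', hP, Finset.mem_filter, Finset.mem_product, and_assoc]
  -- S members have i < a, j < b
  have hSlt : ∀ ij : ℕ × ℕ, ij ∈ S → ij.1 < a ∧ ij.2 < b := by
    intro ij hij
    rw [memS] at hij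
    obtain ⟨h1, h2, h3, h4, h5⟩ := hij
    constructor
    · by_contra h
      push_neg at h
      have : b * a ≤ b * ij.1 := Nat.mul_le_mul_left b h
      nlinarith [Nat.one_le_iff_ne_zero.mp h3]
    · by_contra h
      push_neg at h
      have : a * b ≤ a * ij.2 := Nat.mul_le_mul_left a h
      nlinarith [Nat.one_le_iff_ne_zero.mp h1]
  -- bijection between S and S'
  have hcard : S.card = S'.card := by
    apply Finset.card_bij' (fun ij _ => (a - ij.1, b - ij.2)) (fun ij _ => (a - ij.1, b - ij.2))
    · intro ij hij
      obtain ⟨hia, hjb⟩ := hSlt ij hij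
      rw [memS] at hij
      obtain ⟨h1, h2, h3, h4, h5⟩ := hij
      rw [memS']
      have e1 : b * (a - ij.1) = b * a - b * ij.1 := Nat.mul_sub b a ij.1
      have e2 : a * (b - ij.2) = a * b - a * ij.2 := Nat.mul_sub a b ij.2
      have hbi : b * ij.1 ≤ b * a := Nat.mul_le_mul_left b h2
      have haj : a * ij.2 ≤ a * b := Nat.mul_le_mul_left a h4
      have hba : b * a = a * b := Nat.mul_comm b a
      refine ⟨by omega, by omega, by omega, by omega, ?_, by omega, by omega⟩
      rw [e1, e2]
      omega
    · intro ij hij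
      rw [memS'] at hij
      obtain ⟨h1, h2, h3, h4, h5, h6, h7⟩ := hij
      rw [memS]
      have e1 : b * (a - ij.1) = b * a - b * ij.1 := Nat.mul_sub b a ij.1
      have e2 : a * (b - ij.2) = a * b - a * ij.2 := Nat.mul_sub a b ij.2
      have hbi : b * ij.1 ≤ b * a := Nat.mul_le_mul_left b h2
      have haj : a * ij.2 ≤ a * b := Nat.mul_le_mul_left a h4
      have hba : b * a = a * b := Nat.mul_comm b a
      refine ⟨by omega, by omega, by omega, by omega, ?_⟩
      rw [e1, e2]
      omega
    · intro ij hij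
      obtain ⟨hia, hjb⟩ := hSlt ij hij
      rw [memS] at hij
      ext <;> simp <;> omega
    · intro ij hij
      rw [memS'] at hij
      ext <;> simp <;> omega
  -- S and S' are disjoint, their union is U
  have hdisj : Disjoint S S' := by
    rw [Finset.disjoint_left]
    intro ij h1 h2
    rw [memS] at h1
    rw [memS'] at h2
    omega
  have hunion : S ∪ S' = U := by
    ext ij
    rw [Finset.mem_union, memS, memS']
    simp only [hU, hP, Finset.mem_filter, Finset.mem_product, Finset.mem_Icc]
    constructor
    · rintro (⟨h1, h2, h3, h4, h5⟩ | ⟨h1, h2, h3, h4, h5, h6, h7⟩)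
      · have := hSlt ij ((memS ij).mpr ⟨h1, h2, h3, h4, h5⟩)
        exact ⟨⟨⟨h1, h2⟩, h3, h4⟩, this⟩
      · exact ⟨⟨⟨h1, h2⟩, h3, h4⟩, h6, h7⟩
    · rintro ⟨⟨⟨h1, h2⟩, h3, h4⟩, h5, h6⟩
      have hne : b * ij.1 + a * ij.2 ≠ a * b := by
        intro heq
        have hdvd : a ∣ b * ij.1 := ⟨b - ij.2, by rw [Nat.mul_sub]; omega⟩
        have : a ∣ ij.1 := (Nat.Coprime.dvd_of_dvd_mul_left hab hdvd)
        have := Nat.le_of_dvd (by omega) this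
        omega
      rcases Nat.lt_or_ge (b * ij.1 + a * ij.2) (a * b) with h | h
      · exact Or.inl ⟨h1, h2, h3, h4, h⟩
      · exact Or.inr ⟨h1, h2, h3, h4, by omega, h5, h6⟩
  -- card U
  have hcardU : U.card = (a - 1) * (b - 1) := by
    have : U = Finset.Icc 1 (a - 1) ×ˢ Finset.Icc 1 (b - 1) := by
      ext ij
      simp only [hU, hP, Finset.mem_filter, Finset.mem_product, Finset.mem_Icc]
      omega
    rw [this, Finset.card_product, Nat.card_Icc, Nat.card_Icc,
      Nat.add_sub_cancel, Nat.add_sub_cancel]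
  have := Finset.card_union_of_disjoint hdisj
  rw [hunion, hcardU] at this
  omega

lemma frac_bounds (m n : ℕ) (hn : 0 < n) (hnd : ¬ n ∣ m) :
    0 < (⌈(m:ℚ)/n⌉ : ℚ) - (m:ℚ)/n ∧ (⌈(m:ℚ)/n⌉ : ℚ) - (m:ℚ)/n < 1 := by
  set x : ℚ := (m:ℚ)/n with hx
  have h1 : x ≤ (⌈x⌉ : ℚ) := Int.le_ceil x
  have h2 : (⌈x⌉:ℚ) < x + 1 := Int.ceil_lt_add_one x
  refine ⟨?_, by linarith⟩
  rcases lt_or_eq_of_le h1 with h | h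
  · linarith
  · exfalso
    have hn' : (n:ℚ) ≠ 0 := Nat.cast_ne_zero.mpr hn.ne'
    have he : (⌈x⌉ : ℚ) * n = m := by
      rw [← h, hx]; field_simp
    have he' : (⌈x⌉ : ℤ) * n = m := by exact_mod_cast he
    exact hnd (Int.natCast_dvd_natCast.mp (Dvd.intro_left _ he'))

/-- For coprime integers `a, b ≥ 2` and a positive integer `q` coprime to `ab`, the rational
number `E = ∑_{(i,j) : i,j ≥ 1, bi + aj < ab} (⌈q(ab − bi − aj)/(ab)⌉ − q(ab − bi − aj)/(ab))`
satisfies `0 < E < (a−1)(b−1)/2`. -/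
theorem stmt17 (a b : ℕ) (ha : 2 ≤ a) (hb : 2 ≤ b) (hab : Nat.Coprime a b)
    (q : ℕ) (hq : 0 < q) (hqab : Nat.Coprime q (a * b))
    (E : ℚ)
    (hE : E = ∑ ij ∈ (Finset.Icc 1 a ×ˢ Finset.Icc 1 b).filter
        (fun ij => b * ij.1 + a * ij.2 < a * b),
        ((⌈(q * ((a : ℚ) * b - b * ij.1 - a * ij.2)) / ((a : ℚ) * b)⌉ : ℚ)
          - (q * ((a : ℚ) * b - b * ij.1 - a * ij.2)) / ((a : ℚ) * b))) :
    0 < E ∧ E < ((a : ℚ) - 1) * ((b : ℚ) - 1) / 2 := by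
  set S := (Finset.Icc 1 a ×ˢ Finset.Icc 1 b).filter
      (fun ij => b * ij.1 + a * ij.2 < a * b) with hS
  -- key per-term bounds
  have key : ∀ ij ∈ S, 0 < ((⌈(q * ((a : ℚ) * b - b * ij.1 - a * ij.2)) / ((a : ℚ) * b)⌉ : ℚ)
          - (q * ((a : ℚ) * b - b * ij.1 - a * ij.2)) / ((a : ℚ) * b)) ∧
      ((⌈(q * ((a : ℚ) * b - b * ij.1 - a * ij.2)) / ((a : ℚ) * b)⌉ : ℚ)
          - (q * ((a : ℚ) * b - b * ij.1 - a * ij.2)) / ((a : ℚ) * b)) < 1 := by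
    intro ij hij
    simp only [hS, Finset.mem_filter, Finset.mem_product, Finset.mem_Icc] at hij
    obtain ⟨⟨⟨h1, h2⟩, h3, h4⟩, h5⟩ := hij
    set N : ℕ := a * b - (b * ij.1 + a * ij.2) with hN
    have hb1 : 1 ≤ b * ij.1 := Nat.one_le_iff_ne_zero.mpr (by positivity)
    have hNpos : 0 < N := by omega
    have hNlt : N < a * b := by omega
    have hNc : (N : ℚ) = (a:ℚ) * b - b * ij.1 - a * ij.2 := by
      rw [hN, Nat.cast_sub h5.le]; push_cast; ring
    have heq : (q : ℚ) * ((a : ℚ) * b - b * ij.1 - a * ij.2) / ((a : ℚ) * b)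
        = ((q * N : ℕ) : ℚ) / ((a * b : ℕ) : ℚ) := by
      rw [← hNc]; push_cast; ring
    have hnd : ¬ (a * b) ∣ q * N := by
      intro hd
      have : (a * b) ∣ N := Nat.Coprime.dvd_of_dvd_mul_left hqab.symm hd
      exact absurd (Nat.le_of_dvd hNpos this) (by omega)
    have := frac_bounds (q * N) (a * b) (by positivity) hnd
    rw [heq]
    exact this
  -- S is nonempty
  have hne : S.Nonempty := by
    refine ⟨(1, 1), ?_⟩
    simp only [hS, Finset.mem_filter, Finset.mem_product, Finset.mem_Icc]
    have hab' : a ≠ b := by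
      intro h
      subst h
      have : Nat.gcd a a = 1 := hab
      rw [Nat.gcd_self] at this
      omega
    have h3 : 3 ≤ a ∨ 3 ≤ b := by omega
    refine ⟨⟨⟨le_refl 1, by omega⟩, le_refl 1, by omega⟩, ?_⟩
    rcases h3 with h | h <;> nlinarith
  constructor
  · rw [hE]
    exact Finset.sum_pos (fun ij hij => (key ij hij).1) hne
  · have hlt : E < S.card := by
      rw [hE]
      calc ∑ ij ∈ S, ((⌈(q * ((a : ℚ) * b - b * ij.1 - a * ij.2)) / ((a : ℚ) * b)⌉ : ℚ)
          - (q * ((a : ℚ) * b - b * ij.1 - a * ij.2)) / ((a : ℚ) * b))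
          < ∑ _ij ∈ S, (1 : ℚ) := Finset.sum_lt_sum_of_nonempty hne (fun ij hij => (key ij hij).2)
        _ = S.card := by simp
    have hcard := card_lemma a b ha hb hab
    rw [← hS] at hcard
    have : (S.card : ℚ) = ((a : ℚ) - 1) * ((b : ℚ) - 1) / 2 := by
      have h2 : ((2 * S.card : ℕ) : ℚ) = (((a - 1) * (b - 1) : ℕ) : ℚ) := by rw [hcard]
      push_cast [Nat.cast_sub (by omega : 1 ≤ a), Nat.cast_sub (by omega : 1 ≤ b)] at h2
      linarith
    rwa [this] at hlt
end
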